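/- arXiv:2009.07903 — 8 statements merged into one kernel-verified Lean document; each statement's English description precedes it below -/
import Mathlib

section
/- Let n ≥ 1 and let E be a real symmetric n×n matrix whose kernel is one-dimensional and equal to the span of a nonzero vector ζ ∈ ℝⁿ. Let μ denote the product of the nonzero eigenvalues of E, counted with multiplicity. Then the adjugate of E satisfies adj(E) = (μ/‖ζ‖²)·ζζᵀ, i.e. (adj E)ᵢⱼ = μ ζᵢ ζⱼ / ‖ζ‖² for all indices i, j. -/
open Matrix BigOperators

open Finset Module

/-! Diagonalize `E = U D Uᵀ` with `U` orthogonal, so that `adj E = U (adj D) Uᵀ`. By rank–nullity the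
number of vanishing eigenvalues is `dim ker E = 1`, say `d i₀ = 0`; then `adj D` has the single nonzero entry
`∏_{j ≠ i₀} d j = μ` at `(i₀, i₀)`, hence `adj E = μ u uᵀ` for the unit eigenvector `u` spanning
`ker E`, i.e. `u = ± ζ / ‖ζ‖`. -/

namespace Matrix

variable {n : Type*} [Fintype n]

theorem vecMulVec_self_eq_of_mem_span_singleton {K : Type*} [Field K] {u ζ : n → K}
    (hu : u ∈ Submodule.span K {ζ}) (hu1 : u ⬝ᵥ u = 1) :
    vecMulVec u u = (ζ ⬝ᵥ ζ)⁻¹ • vecMulVec ζ ζ := by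
  obtain ⟨a, rfl⟩ := Submodule.mem_span_singleton.mp hu
  have h_inv : (ζ ⬝ᵥ ζ)⁻¹ = a * a := by
    rw [smul_dotProduct, dotProduct_smul, smul_eq_mul, smul_eq_mul, ← mul_assoc] at hu1
    exact inv_eq_of_mul_eq_one_left hu1
  rw [h_inv, vecMulVec_smul, smul_vecMulVec, smul_smul, mul_comm]

variable [DecidableEq n]

theorem adjugate_mul_mul_of_mul_eq_one {R : Type*} [CommRing R] {U V : Matrix n n R}
    (hVU : V * U = 1) (A : Matrix n n R) : (U * A * V).adjugate = U * A.adjugate * V := by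
  have hUV : U * V = 1 := mul_eq_one_comm.mp hVU
  have hadjU : U.adjugate = U.det • V := by
    rw [← mul_one U.adjugate, ← hUV, ← mul_assoc, adjugate_mul, smul_mul, one_mul]
  have hadjV : V.adjugate = V.det • U := by
    rw [← mul_one V.adjugate, ← hVU, ← mul_assoc, adjugate_mul, smul_mul, one_mul]
  have hdet : U.det * V.det = 1 := by rw [← det_mul, hUV, det_one]
  rw [adjugate_mul_distrib, adjugate_mul_distrib, hadjU, hadjV, Matrix.mul_smul, Matrix.mul_smul,
    Matrix.smul_mul, smul_smul, hdet, one_smul, mul_assoc]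

theorem adjugate_diagonal_of_eq_zero {R : Type*} [CommRing R] {d : n → R} {i : n}
    (hi : d i = 0) : (diagonal d).adjugate = single i i (∏ j ∈ univ.erase i, d j) := by
  rw [adjugate_diagonal, ← diagonal_single]
  congr 1
  ext k
  rcases eq_or_ne k i with rfl | hk
  · simp
  · rw [Pi.single_eq_of_ne hk]
    exact prod_eq_zero (mem_erase.mpr ⟨fun h => hk h.symm, mem_univ i⟩) hi

theorem mul_single_mul {R : Type*} [CommSemiring R] (U V : Matrix n n R) (i : n) (c : R) :
    U * single i i c * V = c • vecMulVec (fun k => U k i) (V i) := by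
  ext k l
  simp only [mul_apply, single_apply, ite_and, mul_ite, mul_zero, sum_ite_eq, mem_univ,
    ↓reduceIte, ite_mul, zero_mul, smul_apply, vecMulVec_apply, smul_eq_mul]
  ring

namespace IsHermitian

variable {𝕜 : Type*} [RCLike 𝕜] {A : Matrix n n 𝕜}

theorem card_eigenvalues_eq_zero_eq_finrank_ker (hA : A.IsHermitian) :
    #{i | hA.eigenvalues i = 0} = finrank 𝕜 (LinearMap.ker A.mulVecLin) := by
  have hrank : A.rank = Fintype.card n - #{i | hA.eigenvalues i = 0} := by
    rw [hA.rank_eq_card_non_zero_eigs, Fintype.card_subtype_compl, Fintype.card_subtype]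
  have hnullity := A.mulVecLin.finrank_range_add_finrank_ker
  rw [← Matrix.rank, hrank, finrank_fintype_fun_eq_card] at hnullity
  have := card_le_univ {i | hA.eigenvalues i = 0}
  omega

theorem eigenvectorBasis_mem_ker (hA : A.IsHermitian) {i : n} (hi : hA.eigenvalues i = 0) :
    ⇑(hA.eigenvectorBasis i) ∈ LinearMap.ker A.mulVecLin := by
  simp [hA.mulVec_eigenvectorBasis, hi]

theorem adjugate_eq_smul_vecMulVec (hA : A.IsHermitian) {i : n} (hi : hA.eigenvalues i = 0) :
    A.adjugate = (∏ j ∈ univ.erase i, (hA.eigenvalues j : 𝕜)) •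
      vecMulVec ⇑(hA.eigenvectorBasis i) (star ⇑(hA.eigenvectorBasis i)) := by
  conv_lhs => rw [hA.spectral_theorem, Unitary.conjStarAlgAut_apply]
  rw [adjugate_mul_mul_of_mul_eq_one (Unitary.coe_star_mul_self _),
    adjugate_diagonal_of_eq_zero (i := i) (by simp [hi]), mul_single_mul]
  rfl

end IsHermitian

end Matrix

theorem adjugate_of_symmetric_with_one_dim_kernel_general
    (n : ℕ) (E : Matrix (Fin n) (Fin n) ℝ)
    (hE : E.IsHermitian) (ζ : Fin n → ℝ) (hζ : ζ ≠ 0)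
    (hker : LinearMap.ker E.mulVecLin = Submodule.span ℝ {ζ})
    (μ : ℝ)
    (hμ : μ = ∏ i ∈ Finset.univ.filter (fun i => hE.eigenvalues i ≠ 0), hE.eigenvalues i) :
    ∀ i j, E.adjugate i j = μ * ζ i * ζ j / (ζ ⬝ᵥ ζ) := by
  obtain ⟨i₀, hi₀⟩ : ∃ i₀, ({i | hE.eigenvalues i = 0} : Finset (Fin n)) = {i₀} := by
    rw [← card_eq_one, hE.card_eigenvalues_eq_zero_eq_finrank_ker, hker, finrank_span_singleton hζ]
  have h_zero : ∀ j, hE.eigenvalues j = 0 ↔ j = i₀ := by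
    simpa [Finset.ext_iff] using hi₀
  have h_μ : μ = ∏ j ∈ univ.erase i₀, hE.eigenvalues j := by
    rw [hμ]
    congr 1
    ext j
    simp [h_zero]
  set u := ⇑(hE.eigenvectorBasis i₀)
  have hu : vecMulVec u u = (ζ ⬝ᵥ ζ)⁻¹ • vecMulVec ζ ζ :=
    vecMulVec_self_eq_of_mem_span_singleton
      (hker ▸ hE.eigenvectorBasis_mem_ker ((h_zero i₀).2 rfl))
      (star_trivial u ▸ hE.eigenvectorBasis.inner_eq_one i₀)
  intro i j
  rw [hE.adjugate_eq_smul_vecMulVec ((h_zero i₀).2 rfl), star_trivial, hu]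
  simp only [Real.ringHom_apply, Matrix.smul_apply, vecMulVec_apply, smul_eq_mul, h_μ]
  ring

/-- For a real symmetric `n × n` matrix `E` (`n ≥ 1`) whose kernel is one-dimensional,
spanned by the nonzero vector `ζ`, the adjugate of `E` equals `(μ/‖ζ‖²) ζ ζᵀ`,
where `μ` is the product of the nonzero eigenvalues of `E` counted with multiplicity. -/
theorem adjugate_of_symmetric_with_one_dim_kernel
    (n : ℕ) (hn : 1 ≤ n) (E : Matrix (Fin n) (Fin n) ℝ)
    (hE : E.IsHermitian) (ζ : Fin n → ℝ) (hζ : ζ ≠ 0)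
    (hker : LinearMap.ker E.mulVecLin = Submodule.span ℝ {ζ})
    (μ : ℝ)
    (hμ : μ = ∏ i ∈ Finset.univ.filter (fun i => hE.eigenvalues i ≠ 0), hE.eigenvalues i) :
    ∀ i j, E.adjugate i j = μ * ζ i * ζ j / (ζ ⬝ᵥ ζ) :=
  adjugate_of_symmetric_with_one_dim_kernel_general n E hE ζ hζ hker μ hμ
end

section
/- Let n ≥ 1 and let E be a real symmetric n×n matrix whose kernel is one-dimensional and equal to the span of a nonzero vector ζ ∈ ℝⁿ, and let μ be the product of the nonzero eigenvalues of E counted with multiplicity. Then for every real n×n matrix M, trace(adj(E)·M) = μ·(ζᵀ M ζ)/‖ζ‖². -/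
open Matrix

/-! Since `E · adj E = det E · 1 = 0`, every column of `adj E` lies in `ker E = span ζ`; as `adj E`
is symmetric, `adj E = k ζ ζᵀ` for a scalar `k`, whence `tr (adj E · M) = k ζᵀ M ζ`. Taking `M = 1`
gives `k ‖ζ‖² = tr (adj E)`, and diagonalising `E` shows that `tr (adj E)` is the sum over `i` of the
products of all eigenvalues but the `i`-th; only the term omitting the single zero eigenvalue
survives, and it is `μ`. -/

open Finset in
theorem Finset.sum_prod_erase_of_eq_zero {ι R : Type*} [CommSemiring R] [DecidableEq ι]
    {s : Finset ι} {f : ι → R} {z : ι} (hz : z ∈ s) (hfz : f z = 0) :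
    ∑ i ∈ s, ∏ j ∈ s.erase i, f j = ∏ j ∈ s.erase z, f j :=
  sum_eq_single_of_mem z hz fun _ _ hiz => prod_eq_zero (mem_erase.mpr ⟨Ne.symm hiz, hz⟩) hfz

namespace Matrix

variable {n : Type*}

theorem trace_vecMulVec_mul [Fintype n] {R : Type*} [CommSemiring R] (u v : n → R)
    (M : Matrix n n R) : (vecMulVec u v * M).trace = v ⬝ᵥ M *ᵥ u := by
  rw [vecMulVec_mul, trace_vecMulVec, dotProduct_comm, dotProduct_mulVec]

theorem exists_eq_smul_of_isSymm_vecMulVec {K : Type*} [Field K] {v c : n → K} (hv : v ≠ 0)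
    (hsymm : (vecMulVec v c).IsSymm) : ∃ k : K, c = k • v := by
  obtain ⟨i₀, hi₀⟩ : ∃ i, v i ≠ 0 := Function.ne_iff.mp hv
  refine ⟨c i₀ / v i₀, funext fun j => ?_⟩
  have h := hsymm.apply i₀ j
  simp only [vecMulVec_apply] at h
  rw [Pi.smul_apply, smul_eq_mul, div_mul_eq_mul_div, eq_div_iff hi₀]
  linear_combination -h

variable [Fintype n] [DecidableEq n] {K : Type*} [Field K] {A : Matrix n n K} {v : n → K}

theorem exists_adjugate_eq_vecMulVec_of_ker_eq_span (hv : v ≠ 0)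
    (hker : LinearMap.ker A.mulVecLin = Submodule.span K {v}) :
    ∃ c : n → K, A.adjugate = vecMulVec v c := by
  have hv_ker : v ∈ LinearMap.ker A.mulVecLin := hker ▸ Submodule.mem_span_singleton_self v
  have hdet : A.det = 0 := exists_mulVec_eq_zero_iff.mp ⟨v, hv, hv_ker⟩
  have hcol (j : n) : ∃ c : K, c • v = A.adjugate.col j := by
    rw [← Submodule.mem_span_singleton, ← hker, LinearMap.mem_ker, mulVecLin_apply,
      ← mulVec_single_one, mulVec_mulVec, mul_adjugate, hdet, zero_smul, zero_mulVec]
  choose c hc using hcol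
  refine ⟨c, ext fun i j => ?_⟩
  rw [vecMulVec_apply, mul_comm, ← smul_eq_mul, ← Pi.smul_apply, hc j, col_apply]

theorem IsSymm.exists_adjugate_eq_smul_vecMulVec (hA : A.IsSymm) (hv : v ≠ 0)
    (hker : LinearMap.ker A.mulVecLin = Submodule.span K {v}) :
    ∃ k : K, A.adjugate = k • vecMulVec v v := by
  obtain ⟨c, hc⟩ := exists_adjugate_eq_vecMulVec_of_ker_eq_span hv hker
  obtain ⟨k, rfl⟩ := exists_eq_smul_of_isSymm_vecMulVec hv (hc ▸ hA.adjugate)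
  exact ⟨k, by rw [hc, vecMulVec_smul]⟩

end Matrix

namespace Matrix.IsHermitian

open Finset

variable {n 𝕜 : Type*} [Fintype n] [DecidableEq n] [RCLike 𝕜] {A : Matrix n n 𝕜}

theorem trace_adjugate_eq_sum_prod_erase (hA : A.IsHermitian) :
    A.adjugate.trace = ∑ i, ∏ j ∈ univ.erase i, (hA.eigenvalues j : 𝕜) := by
  set U : Matrix n n 𝕜 := (hA.eigenvectorUnitary : Matrix n n 𝕜)
  have h : A.adjugate =
      (star U).adjugate * (diagonal ((↑) ∘ hA.eigenvalues)).adjugate * U.adjugate := by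
    conv_lhs => rw [hA.spectral_theorem, Unitary.conjStarAlgAut_apply]
    rw [adjugate_mul_distrib, adjugate_mul_distrib, mul_assoc]
  rw [h, trace_mul_cycle, ← adjugate_mul_distrib, Unitary.coe_star_mul_self, adjugate_one, one_mul,
    adjugate_diagonal, trace_diagonal]
  rfl

theorem card_filter_eigenvalues_eq_zero (hA : A.IsHermitian) :
    #{i | hA.eigenvalues i = 0} = Module.finrank 𝕜 (LinearMap.ker A.mulVecLin) := by
  have hnonzero :
      #{i | ¬hA.eigenvalues i = 0} = Module.finrank 𝕜 (LinearMap.range A.mulVecLin) := by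
    rw [← Fintype.card_subtype, ← hA.rank_eq_card_non_zero_eigs, rank]
  have hsplit := card_filter_add_card_filter_not (s := univ) (fun i => hA.eigenvalues i = 0)
  have hrank := LinearMap.finrank_range_add_finrank_ker A.mulVecLin
  rw [card_univ, ← Module.finrank_fintype_fun_eq_card 𝕜] at hsplit
  omega

theorem trace_adjugate_eq_prod_eigenvalues_ne_zero (hA : A.IsHermitian)
    (hker : Module.finrank 𝕜 (LinearMap.ker A.mulVecLin) = 1) :
    A.adjugate.trace = ∏ i with hA.eigenvalues i ≠ 0, (hA.eigenvalues i : 𝕜) := by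
  obtain ⟨z, hz⟩ := card_eq_one.mp (hA.card_filter_eigenvalues_eq_zero.trans hker)
  have hfz : hA.eigenvalues z = 0 := (mem_filter.mp (hz ▸ mem_singleton_self z :)).2
  rw [hA.trace_adjugate_eq_sum_prod_erase, sum_prod_erase_of_eq_zero (mem_univ z) (by simp [hfz]),
    filter_not, hz, ← erase_eq]

end Matrix.IsHermitian

theorem trace_adjugate_mul_of_symmetric_with_one_dim_kernel_general
    (n : ℕ) (E : Matrix (Fin n) (Fin n) ℝ)
    (hE : E.IsHermitian) (ζ : Fin n → ℝ) (hζ : ζ ≠ 0)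
    (hker : LinearMap.ker E.mulVecLin = Submodule.span ℝ {ζ})
    (μ : ℝ)
    (hμ : μ = ∏ i ∈ Finset.univ.filter (fun i => hE.eigenvalues i ≠ 0), hE.eigenvalues i) :
    ∀ M : Matrix (Fin n) (Fin n) ℝ,
      (E.adjugate * M).trace = μ * (ζ ⬝ᵥ M.mulVec ζ) / (ζ ⬝ᵥ ζ) := by
  intro M
  obtain ⟨k, hk⟩ := (isHermitian_iff_isSymm.mp hE).exists_adjugate_eq_smul_vecMulVec hζ hker
  have htrace : k * (ζ ⬝ᵥ ζ) = μ := by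
    have h := hE.trace_adjugate_eq_prod_eigenvalues_ne_zero
      (by rw [hker, finrank_span_singleton hζ])
    rw [hk, trace_smul, trace_vecMulVec, smul_eq_mul] at h
    exact hμ ▸ h
  have hζζ : ζ ⬝ᵥ ζ ≠ 0 := fun h => hζ (dotProduct_self_eq_zero.mp h)
  rw [hk, smul_mul, trace_smul, trace_vecMulVec_mul, smul_eq_mul, ← htrace]
  field_simp

/-- For a real symmetric `n × n` matrix `E` (`n ≥ 1`) whose kernel is one-dimensional,
spanned by the nonzero vector `ζ`, and `μ` the product of the nonzero eigenvalues of `E`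
counted with multiplicity, for every real `n × n` matrix `M` one has
`trace(adj(E) * M) = μ (ζᵀ M ζ)/‖ζ‖²`. -/
theorem trace_adjugate_mul_of_symmetric_with_one_dim_kernel
    (n : ℕ) (hn : 1 ≤ n) (E : Matrix (Fin n) (Fin n) ℝ)
    (hE : E.IsHermitian) (ζ : Fin n → ℝ) (hζ : ζ ≠ 0)
    (hker : LinearMap.ker E.mulVecLin = Submodule.span ℝ {ζ})
    (μ : ℝ)
    (hμ : μ = ∏ i ∈ Finset.univ.filter (fun i => hE.eigenvalues i ≠ 0), hE.eigenvalues i) :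
    ∀ M : Matrix (Fin n) (Fin n) ℝ,
      (E.adjugate * M).trace = μ * (ζ ⬝ᵥ M.mulVec ζ) / (ζ ⬝ᵥ ζ) :=
  trace_adjugate_mul_of_symmetric_with_one_dim_kernel_general n E hE ζ hζ hker μ hμ
end

section
/- Let P, Q, R be real symmetric N×N matrices and define the quadratic matrix pencil E(c) := c²P − cQ + R for c ∈ ℝ. Suppose c₀ ∈ ℝ is such that E(c₀) is singular with one-dimensional kernel spanned by a nonzero vector ζ, and let μ be the product of the nonzero eigenvalues of E(c₀). Then the function Δ(c) := det E(c) satisfies Δ(c₀) = 0 and Δ'(c₀) = μ·ζᵀ(2c₀P − Q)ζ / ‖ζ‖². In particular, if ζᵀ(2c₀P − Q)ζ ≠ 0 then c₀ is a simple root of Δ. -/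
/-!
By Jacobi's formula, `Δ'(c₀) = tr (adj E(c₀) · E'(c₀))` with `E'(c₀) = 2c₀P - Q`.
As `E(c₀) · adj E(c₀) = det E(c₀) = 0`, every column of the adjugate lies in `ker E(c₀) = ⟨ζ⟩`,
and the adjugate of a symmetric matrix is symmetric, so `adj E(c₀) = κ ζζᵀ` and
`Δ'(c₀) = κ ζᵀ(2c₀P - Q)ζ`. Taking traces, `κ ‖ζ‖² = tr adj E(c₀) = ∑ⱼ ∏_{i ≠ j} λᵢ`, and with
exactly one eigenvalue `λᵢ` equal to zero this sum is `μ`.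
-/

open Matrix BigOperators Finset Module

theorem Finset.sum_prod_erase_eq_prod_filter_ne_zero {ι M : Type*} [DecidableEq ι]
    [CommSemiring M] [DecidableEq M] {s : Finset ι} {f : ι → M}
    (h : #(s.filter fun i => f i = 0) = 1) :
    ∑ j ∈ s, ∏ i ∈ s.erase j, f i = ∏ i ∈ s.filter fun i => f i ≠ 0, f i := by
  obtain ⟨j₀, hj₀⟩ := card_eq_one.mp h
  have hzero : ∀ i ∈ s, f i = 0 ↔ i = j₀ := fun i hi => by
    simpa [hi] using congrArg (i ∈ ·) hj₀
  have hj₀s : j₀ ∈ s := (mem_filter.mp (hj₀ ▸ mem_singleton_self j₀)).1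
  have hnonzero : (s.filter fun i => f i ≠ 0) = s.erase j₀ := by
    ext i
    by_cases hi : i ∈ s <;> simp [hi, hzero i]
  rw [hnonzero, sum_eq_single_of_mem j₀ hj₀s]
  intro j hj hne
  exact prod_eq_zero (mem_erase.mpr ⟨Ne.symm hne, hj₀s⟩) ((hzero j₀ hj₀s).mpr rfl)

namespace Matrix

variable {n : Type*} [Fintype n]

theorem trace_smul_vecMulVec_mul {R : Type*} [CommRing R] (κ : R) (ζ : n → R)
    (B : Matrix n n R) : trace (κ • vecMulVec ζ ζ * B) = κ * (ζ ⬝ᵥ B *ᵥ ζ) := by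
  rw [smul_mul, trace_smul, vecMulVec_mul, trace_vecMulVec, dotProduct_comm, ← dotProduct_mulVec,
    smul_eq_mul]

variable [DecidableEq n]

theorem det_updateCol_eq_sum_perm {R : Type*} [CommRing R] (A : Matrix n n R) (j : n)
    (v : n → R) :
    (A.updateCol j v).det =
      ∑ σ : Equiv.Perm n,
        (Equiv.Perm.sign σ : R) * ((∏ i ∈ univ.erase j, A (σ i) i) * v (σ j)) := by
  rw [det_apply']
  refine sum_congr rfl fun σ _ => ?_
  rw [← prod_erase_mul _ _ (mem_univ j), updateCol_self]
  congr 2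
  exact prod_congr rfl fun i hi => updateCol_ne (ne_of_mem_erase hi)

theorem trace_adjugate_mul {R : Type*} [CommRing R] (A B : Matrix n n R) :
    trace (adjugate A * B) = ∑ j, (A.updateCol j fun k => B k j).det := by
  simp [trace, mul_apply, ← cramer_apply, cramer_eq_adjugate_mulVec, mulVec, dotProduct]

theorem hasDerivAt_det {𝕜 : Type*} [NontriviallyNormedField 𝕜] {A : 𝕜 → Matrix n n 𝕜}
    {A' : Matrix n n 𝕜} {t : 𝕜} (hA : ∀ i j, HasDerivAt (fun s => A s i j) (A' i j) t) :
    HasDerivAt (fun s => (A s).det) (trace (adjugate (A t) * A')) t := by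
  simp_rw [det_apply', trace_adjugate_mul, det_updateCol_eq_sum_perm]
  rw [sum_comm]
  refine HasDerivAt.fun_sum fun σ _ => ?_
  simpa [mul_sum, sum_mul, mul_comm] using
    (HasDerivAt.fun_finsetProd (u := univ) fun i _ => hA (σ i) i).const_mul
      (Equiv.Perm.sign σ : 𝕜)

theorem det_eq_zero_of_ker_eq_span {K : Type*} [Field K] {A : Matrix n n K} {ζ : n → K}
    (hζ : ζ ≠ 0) (hker : LinearMap.ker A.mulVecLin = Submodule.span K {ζ}) : A.det = 0 :=
  exists_mulVec_eq_zero_iff.mp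
    ⟨ζ, hζ, LinearMap.mem_ker.mp (hker ▸ Submodule.mem_span_singleton_self ζ)⟩

theorem adjugate_eq_smul_vecMulVec_of_ker_eq_span {K : Type*} [Field K] {A : Matrix n n K}
    (hA : A.IsSymm) {ζ : n → K} (hζ : ζ ≠ 0)
    (hker : LinearMap.ker A.mulVecLin = Submodule.span K {ζ}) :
    ∃ κ : K, adjugate A = κ • vecMulVec ζ ζ := by
  have hdet : A.det = 0 := det_eq_zero_of_ker_eq_span hζ hker
  have hcol : ∀ k, ∃ a : K, a • ζ = adjugate A *ᵥ Pi.single k 1 := fun k => by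
    refine Submodule.mem_span_singleton.mp (hker ▸ LinearMap.mem_ker.mpr ?_)
    rw [mulVecLin_apply, mulVec_mulVec, mul_adjugate, hdet, zero_smul, zero_mulVec]
  choose a ha using hcol
  have hentry : ∀ i k, adjugate A i k = a k * ζ i := fun i k => by
    simpa [mulVec_single_one] using (congrFun (ha k) i).symm
  have hsymm : ∀ i k, adjugate A i k = adjugate A k i := fun i k => by
    rw [← transpose_apply (adjugate A), adjugate_transpose, hA.eq]
  obtain ⟨i₀, hi₀⟩ : ∃ i, ζ i ≠ 0 := Function.ne_iff.mp hζ
  refine ⟨a i₀ / ζ i₀, ext fun i k => ?_⟩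
  have hk : a k * ζ i₀ = a i₀ * ζ k := by rw [← hentry, hsymm, hentry]
  rw [hentry, smul_apply, vecMulVec_apply, smul_eq_mul]
  field_simp
  linear_combination ζ i * hk

variable {𝕜 : Type*} [RCLike 𝕜] {A : Matrix n n 𝕜}

theorem IsHermitian.trace_adjugate (hA : A.IsHermitian) :
    trace A.adjugate = ∑ j, ∏ i ∈ univ.erase j, (hA.eigenvalues i : 𝕜) := by
  have hU : star (hA.eigenvectorUnitary : Matrix n n 𝕜) * hA.eigenvectorUnitary = 1 :=
    Unitary.coe_star_mul_self _
  conv_lhs => rw [hA.spectral_theorem, Unitary.conjStarAlgAut_apply]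
  rw [adjugate_mul_distrib, adjugate_mul_distrib, trace_mul_comm, mul_assoc,
    ← adjugate_mul_distrib, hU, adjugate_one, mul_one, adjugate_diagonal, trace_diagonal]
  rfl

theorem IsHermitian.card_filter_eigenvalues_eq_zero_s2 (hA : A.IsHermitian) :
    #(univ.filter fun i => hA.eigenvalues i = 0) = finrank 𝕜 (LinearMap.ker A.mulVecLin) := by
  have hrank := hA.rank_eq_card_non_zero_eigs
  have hsplit := card_filter_add_card_filter_not (s := univ) fun i => hA.eigenvalues i = 0
  have hnullity := LinearMap.finrank_range_add_finrank_ker A.mulVecLin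
  rw [Fintype.card_subtype] at hrank
  simp only [ne_eq] at hrank
  simp only [rank, card_univ] at hrank hsplit hnullity ⊢
  rw [finrank_fintype_fun_eq_card] at hnullity
  omega

end Matrix

theorem hasDerivAt_quadratic_pencil_apply {n : Type*} (P Q R : Matrix n n ℝ) (c : ℝ) (i j : n) :
    HasDerivAt (fun s : ℝ => (s ^ 2 • P - s • Q + R) i j) (((2 * c) • P - Q) i j) c := by
  simpa [two_mul, add_mul] using
    (((hasDerivAt_pow 2 c).mul_const (P i j)).sub ((hasDerivAt_id c).mul_const (Q i j))).add_const
      (R i j)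

theorem pencil_det_deriv_at_simple_characteristic_general
    (N : ℕ) (P Q R : Matrix (Fin N) (Fin N) ℝ)
    (Δ : ℝ → ℝ) (hΔ : ∀ c, Δ c = (c ^ 2 • P - c • Q + R).det)
    (c₀ : ℝ) (ζ : Fin N → ℝ) (hζ : ζ ≠ 0)
    (hker : LinearMap.ker (c₀ ^ 2 • P - c₀ • Q + R).mulVecLin = Submodule.span ℝ {ζ})
    (hE₀ : (c₀ ^ 2 • P - c₀ • Q + R).IsHermitian)
    (μ : ℝ)
    (hμ : μ = ∏ i ∈ Finset.univ.filter (fun i => hE₀.eigenvalues i ≠ 0), hE₀.eigenvalues i) :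
    Δ c₀ = 0 ∧
    deriv Δ c₀ = μ * (ζ ⬝ᵥ ((2 * c₀) • P - Q).mulVec ζ) / (ζ ⬝ᵥ ζ) ∧
    (ζ ⬝ᵥ ((2 * c₀) • P - Q).mulVec ζ ≠ 0 → deriv Δ c₀ ≠ 0) := by
  obtain ⟨κ, hκ⟩ := adjugate_eq_smul_vecMulVec_of_ker_eq_span
    (by rw [IsSymm, ← conjTranspose_eq_transpose_of_trivial, hE₀.eq]) hζ hker
  have hκμ : κ * (ζ ⬝ᵥ ζ) = μ := by
    have hone : #(univ.filter fun i => hE₀.eigenvalues i = 0) = 1 := by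
      rw [hE₀.card_filter_eigenvalues_eq_zero_s2, hker, finrank_span_singleton hζ]
    have htrace := hE₀.trace_adjugate
    rw [hκ, trace_smul, trace_vecMulVec, smul_eq_mul] at htrace
    rw [htrace, hμ, ← sum_prod_erase_eq_prod_filter_ne_zero hone]
    rfl
  have hderiv : deriv Δ c₀ = κ * (ζ ⬝ᵥ ((2 * c₀) • P - Q) *ᵥ ζ) := by
    rw [funext hΔ, (hasDerivAt_det (hasDerivAt_quadratic_pencil_apply P Q R c₀)).deriv, hκ,
      trace_smul_vecMulVec_mul]
  have hζζ : ζ ⬝ᵥ ζ ≠ 0 := fun h => hζ (dotProduct_self_eq_zero.mp h)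
  have hμ₀ : μ ≠ 0 := hμ ▸ prod_ne_zero_iff.mpr fun i hi => (mem_filter.mp hi).2
  refine ⟨?_, ?_, fun h => ?_⟩
  · rw [hΔ]
    exact det_eq_zero_of_ker_eq_span hζ hker
  · rw [hderiv, ← hκμ]
    field_simp
  · rw [hderiv]
    exact mul_ne_zero (left_ne_zero_of_mul (hκμ ▸ hμ₀)) h

/-- For a quadratic matrix pencil `E(c) = c² P - c Q + R` of real symmetric `N × N`
matrices, if `E(c₀)` is singular with one-dimensional kernel spanned by `ζ ≠ 0` and `μ`
is the product of the nonzero eigenvalues of `E(c₀)`, then `Δ(c) = det E(c)` satisfies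
`Δ(c₀) = 0` and `Δ'(c₀) = μ ζᵀ(2c₀P - Q)ζ / ‖ζ‖²`; in particular, if
`ζᵀ(2c₀P - Q)ζ ≠ 0` then `c₀` is a simple root of `Δ`. -/
theorem pencil_det_deriv_at_simple_characteristic
    (N : ℕ) (P Q R : Matrix (Fin N) (Fin N) ℝ)
    (hP : P.IsHermitian) (hQ : Q.IsHermitian) (hR : R.IsHermitian)
    (Δ : ℝ → ℝ) (hΔ : ∀ c, Δ c = (c ^ 2 • P - c • Q + R).det)
    (c₀ : ℝ) (ζ : Fin N → ℝ) (hζ : ζ ≠ 0)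
    (hker : LinearMap.ker (c₀ ^ 2 • P - c₀ • Q + R).mulVecLin = Submodule.span ℝ {ζ})
    (hE₀ : (c₀ ^ 2 • P - c₀ • Q + R).IsHermitian)
    (μ : ℝ)
    (hμ : μ = ∏ i ∈ Finset.univ.filter (fun i => hE₀.eigenvalues i ≠ 0), hE₀.eigenvalues i) :
    Δ c₀ = 0 ∧
    deriv Δ c₀ = μ * (ζ ⬝ᵥ ((2 * c₀) • P - Q).mulVec ζ) / (ζ ⬝ᵥ ζ) ∧
    (ζ ⬝ᵥ ((2 * c₀) • P - Q).mulVec ζ ≠ 0 → deriv Δ c₀ ≠ 0) :=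
  pencil_det_deriv_at_simple_characteristic_general N P Q R Δ hΔ c₀ ζ hζ hker hE₀ μ hμ
end

section
/- Let α₁, α₂, β ∈ ℝ with β ≠ 0, define 𝒜, ℬ : ℝ × ℝ → ℝ by 𝒜(k, ω) = (ω + α₁k² + α₂k³)/(2β) and ℬ(k, ω) = (α₁ k + (3/2) α₂ k²)(ω + α₁k² + α₂k³)/β, and fix (k, ω) ∈ ℝ² with ρ := (ω + α₁k² + α₂k³)/β. Then for every c ∈ ℝ, the characteristic equation ∂_ω𝒜 · c² − (∂_k𝒜 + ∂_ωℬ) · c + ∂_kℬ = 0 (partial derivatives evaluated at (k, ω)) holds if and only if (c − 2α₁k − 3α₂k²)² = −2ρβ(α₁ + 3α₂k). In particular the characteristics are c± = 2α₁k + 3α₂k² ± √(−2ρβ(α₁ + 3α₂k)) whenever β(α₁ + 3α₂k) ≤ 0 and ρ ≥ 0. -/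
/-!
Write `Ω(k, ω) = ω + α₁k² + α₂k³`, so that `ρβ = Ω`. Then `𝒜 = Ω / 2β` and `ℬ = Ω_k Ω / 2β`,
hence `∂_ω𝒜 = 1 / 2β`, `∂_k𝒜 = ∂_ωℬ = Ω_k / 2β` and `∂_kℬ = (Ω_k² + Ω_kk Ω) / 2β`. The
characteristic quadratic is therefore `((c - Ω_k)² + Ω_kk Ω) / 2β` with `Ω_kk = 2(α₁ + 3α₂k)`,
and `c±` are its two roots as soon as the discriminant `-Ω_kk Ω` is nonnegative.
-/

noncomputable section

def nlsWaveAction (α₁ α₂ β k ω : ℝ) : ℝ :=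
  (ω + α₁ * k ^ 2 + α₂ * k ^ 3) / (2 * β)

def nlsWaveActionFlux (α₁ α₂ β k ω : ℝ) : ℝ :=
  (α₁ * k + (3 / 2) * α₂ * k ^ 2) * (ω + α₁ * k ^ 2 + α₂ * k ^ 3) / β

section Derivatives

variable (α₁ α₂ β k ω : ℝ)

lemma hasDerivAt_dispersion_omega :
    HasDerivAt (fun ω' => ω' + α₁ * k ^ 2 + α₂ * k ^ 3) 1 ω :=
  ((hasDerivAt_id ω).add_const _).add_const _

lemma hasDerivAt_dispersion_k :
    HasDerivAt (fun k' => ω + α₁ * k' ^ 2 + α₂ * k' ^ 3) (2 * α₁ * k + 3 * α₂ * k ^ 2) k := by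
  refine ((((hasDerivAt_pow 2 k).const_mul α₁).const_add ω).add
    ((hasDerivAt_pow 3 k).const_mul α₂)).congr_deriv ?_
  norm_num
  ring

lemma hasDerivAt_half_dispersion_dk :
    HasDerivAt (fun k' => α₁ * k' + (3 / 2) * α₂ * k' ^ 2) (α₁ + 3 * α₂ * k) k := by
  refine (((hasDerivAt_id k).const_mul α₁).add
    ((hasDerivAt_pow 2 k).const_mul ((3 / 2) * α₂))).congr_deriv ?_
  norm_num
  ring

lemma deriv_nlsWaveAction_omega :
    deriv (fun ω' => nlsWaveAction α₁ α₂ β k ω') ω = 1 / (2 * β) :=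
  ((hasDerivAt_dispersion_omega α₁ α₂ k ω).div_const _).deriv

lemma deriv_nlsWaveAction_k :
    deriv (fun k' => nlsWaveAction α₁ α₂ β k' ω) k
      = (2 * α₁ * k + 3 * α₂ * k ^ 2) / (2 * β) :=
  ((hasDerivAt_dispersion_k α₁ α₂ k ω).div_const _).deriv

lemma deriv_nlsWaveActionFlux_omega :
    deriv (fun ω' => nlsWaveActionFlux α₁ α₂ β k ω') ω
      = (2 * α₁ * k + 3 * α₂ * k ^ 2) / (2 * β) := by
  refine (((hasDerivAt_dispersion_omega α₁ α₂ k ω).const_mul _).div_const _).deriv.trans ?_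
  field_simp

lemma deriv_nlsWaveActionFlux_k :
    deriv (fun k' => nlsWaveActionFlux α₁ α₂ β k' ω) k
      = ((2 * α₁ * k + 3 * α₂ * k ^ 2) ^ 2
          + 2 * (α₁ + 3 * α₂ * k) * (ω + α₁ * k ^ 2 + α₂ * k ^ 3)) / (2 * β) := by
  refine (((hasDerivAt_half_dispersion_dk α₁ α₂ k).mul
    (hasDerivAt_dispersion_k α₁ α₂ k ω)).div_const _).deriv.trans ?_
  field_simp
  ring

end Derivatives

lemma characteristic_quadratic_eq_zero_iff {β v w c : ℝ} (hβ : β ≠ 0) :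
    1 / (2 * β) * c ^ 2 - (v / (2 * β) + v / (2 * β)) * c + (v ^ 2 + w) / (2 * β) = 0
      ↔ (c - v) ^ 2 = -w := by
  have h2β : 2 * β ≠ 0 := mul_ne_zero two_ne_zero hβ
  have hquad : 1 / (2 * β) * c ^ 2 - (v / (2 * β) + v / (2 * β)) * c + (v ^ 2 + w) / (2 * β)
      = ((c - v) ^ 2 + w) / (2 * β) := by
    field_simp
    ring
  rw [hquad, div_eq_zero_iff, or_iff_left h2β, add_eq_zero_iff_eq_neg]

lemma sq_sign_mul_sqrt {s x : ℝ} (hs : s = 1 ∨ s = -1) (hx : 0 ≤ x) :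
    (s * Real.sqrt x) ^ 2 = x := by
  rcases hs with rfl | rfl <;> simp [Real.sq_sqrt hx]

end

/-- For the wave action `𝒜` and flux `ℬ` of the plane-wave solution of the higher-order
NLS equation, a speed `c` satisfies the characteristic equation
`∂_ω𝒜 c² − (∂_k𝒜 + ∂_ωℬ) c + ∂_kℬ = 0` iff
`(c − 2α₁k − 3α₂k²)² = −2ρβ(α₁ + 3α₂k)`; in particular the characteristics are
`c± = 2α₁k + 3α₂k² ± √(−2ρβ(α₁+3α₂k))` whenever `β(α₁+3α₂k) ≤ 0` and `ρ ≥ 0`. -/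
theorem higher_order_NLS_characteristics
    (α₁ α₂ β : ℝ) (hβ : β ≠ 0)
    (𝒜 ℬ : ℝ → ℝ → ℝ)
    (h𝒜 : ∀ k ω, 𝒜 k ω = (ω + α₁ * k ^ 2 + α₂ * k ^ 3) / (2 * β))
    (hℬ : ∀ k ω, ℬ k ω = (α₁ * k + (3 / 2) * α₂ * k ^ 2) * (ω + α₁ * k ^ 2 + α₂ * k ^ 3) / β)
    (k ω ρ : ℝ) (hρ : ρ = (ω + α₁ * k ^ 2 + α₂ * k ^ 3) / β) :
    (∀ c : ℝ,
      (deriv (fun ω' => 𝒜 k ω') ω * c ^ 2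
        - (deriv (fun k' => 𝒜 k' ω) k + deriv (fun ω' => ℬ k ω') ω) * c
        + deriv (fun k' => ℬ k' ω) k = 0)
      ↔ (c - 2 * α₁ * k - 3 * α₂ * k ^ 2) ^ 2 = -2 * ρ * β * (α₁ + 3 * α₂ * k)) ∧
    (β * (α₁ + 3 * α₂ * k) ≤ 0 → 0 ≤ ρ → ∀ s : ℝ, s = 1 ∨ s = -1 →
      deriv (fun ω' => 𝒜 k ω') ω *
          (2 * α₁ * k + 3 * α₂ * k ^ 2
            + s * Real.sqrt (-2 * ρ * β * (α₁ + 3 * α₂ * k))) ^ 2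
        - (deriv (fun k' => 𝒜 k' ω) k + deriv (fun ω' => ℬ k ω') ω) *
          (2 * α₁ * k + 3 * α₂ * k ^ 2
            + s * Real.sqrt (-2 * ρ * β * (α₁ + 3 * α₂ * k)))
        + deriv (fun k' => ℬ k' ω) k = 0) := by
  obtain rfl : 𝒜 = nlsWaveAction α₁ α₂ β := funext₂ h𝒜
  obtain rfl : ℬ = nlsWaveActionFlux α₁ α₂ β := funext₂ hℬ
  have hρβ : ρ * β = ω + α₁ * k ^ 2 + α₂ * k ^ 3 := by
    rw [hρ, div_mul_cancel₀ _ hβ]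
  have key : ∀ c : ℝ,
      (deriv (fun ω' => nlsWaveAction α₁ α₂ β k ω') ω * c ^ 2
        - (deriv (fun k' => nlsWaveAction α₁ α₂ β k' ω) k
          + deriv (fun ω' => nlsWaveActionFlux α₁ α₂ β k ω') ω) * c
        + deriv (fun k' => nlsWaveActionFlux α₁ α₂ β k' ω) k = 0)
      ↔ (c - 2 * α₁ * k - 3 * α₂ * k ^ 2) ^ 2 = -2 * ρ * β * (α₁ + 3 * α₂ * k) := by
    intro c
    rw [deriv_nlsWaveAction_omega, deriv_nlsWaveAction_k, deriv_nlsWaveActionFlux_omega,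
      deriv_nlsWaveActionFlux_k, characteristic_quadratic_eq_zero_iff hβ, ← hρβ]
    constructor <;> intro h <;> linear_combination h
  refine ⟨key, fun hle hρ0 s hs => (key _).2 ?_⟩
  have hdisc : 0 ≤ -2 * ρ * β * (α₁ + 3 * α₂ * k) := by
    nlinarith [mul_nonpos_of_nonneg_of_nonpos hρ0 hle]
  convert sq_sign_mul_sqrt hs hdisc using 2
  ring
end

section
/- Let α₁, α₂, β ∈ ℝ with β ≠ 0, define 𝒜(k, ω) = (ω + α₁k² + α₂k³)/(2β) and ℬ(k, ω) = (α₁ k + (3/2) α₂ k²)(ω + α₁k² + α₂k³)/β, and fix (k, ω) with ρ := (ω + α₁k² + α₂k³)/β > 0. Then the quadratic c ↦ ∂_ω𝒜 · c² − (∂_k𝒜 + ∂_ωℬ) · c + ∂_kℬ (partial derivatives evaluated at (k, ω)) has two distinct real roots if and only if β(α₁ + 3α₂k) < 0. -/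
/-!
With `v = α₁k + (3/2)α₂k²` one has `∂_k(ω + α₁k² + α₂k³) = 2v`, so `∂_k𝒜 = ∂_ωℬ = v/β`, and
the characteristic quadratic completes to `((c - 2v)² + 2ρβ(α₁ + 3α₂k)) / (2β)`. A shifted
square has two distinct real roots exactly when its constant term is negative, and `ρ > 0`.
-/

lemma exists_ne_sub_sq_add_eq_zero_iff (a d : ℝ) :
    (∃ x y : ℝ, x ≠ y ∧ (x - a) ^ 2 + d = 0 ∧ (y - a) ^ 2 + d = 0) ↔ d < 0 := by
  constructor
  · rintro ⟨x, y, hxy, hx, hy⟩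
    by_contra! hd
    have hxa : x - a = 0 := pow_eq_zero_iff two_ne_zero |>.mp (by nlinarith [sq_nonneg (x - a)])
    have hya : y - a = 0 := pow_eq_zero_iff two_ne_zero |>.mp (by nlinarith [sq_nonneg (y - a)])
    exact hxy (by linarith)
  · intro hd
    have hs : 0 < √(-d) := Real.sqrt_pos.mpr (neg_pos.mpr hd)
    have hs2 : √(-d) ^ 2 = -d := Real.sq_sqrt (neg_pos.mpr hd).le
    refine ⟨a + √(-d), a - √(-d), by linarith, ?_, ?_⟩ <;> linear_combination hs2

lemma characteristic_quadratic_eq (α₁ α₂ β : ℝ) (hβ : β ≠ 0) (𝒜 ℬ : ℝ → ℝ → ℝ)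
    (h𝒜 : ∀ k ω, 𝒜 k ω = (ω + α₁ * k ^ 2 + α₂ * k ^ 3) / (2 * β))
    (hℬ : ∀ k ω, ℬ k ω = (α₁ * k + (3 / 2) * α₂ * k ^ 2) * (ω + α₁ * k ^ 2 + α₂ * k ^ 3) / β)
    (k ω c : ℝ) :
    deriv (fun ω' => 𝒜 k ω') ω * c ^ 2
        - (deriv (fun k' => 𝒜 k' ω) k + deriv (fun ω' => ℬ k ω') ω) * c
        + deriv (fun k' => ℬ k' ω) k
      = ((c - 2 * (α₁ * k + (3 / 2) * α₂ * k ^ 2)) ^ 2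
          + 2 * (α₁ + 3 * α₂ * k) * (ω + α₁ * k ^ 2 + α₂ * k ^ 3)) / (2 * β) := by
  have hPω : HasDerivAt (fun ω' => ω' + α₁ * k ^ 2 + α₂ * k ^ 3) 1 ω :=
    ((hasDerivAt_id ω).add_const _).add_const _
  have hPk : HasDerivAt (fun k' => ω + α₁ * k' ^ 2 + α₂ * k' ^ 3)
      (2 * (α₁ * k + (3 / 2) * α₂ * k ^ 2)) k :=
    ((((hasDerivAt_pow 2 k).const_mul α₁).const_add ω).fun_add
      ((hasDerivAt_pow 3 k).const_mul α₂)).congr_deriv (by norm_num; ring)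
  have hvk : HasDerivAt (fun k' => α₁ * k' + (3 / 2) * α₂ * k' ^ 2) (α₁ + 3 * α₂ * k) k :=
    (((hasDerivAt_id' k).const_mul α₁).fun_add
      ((hasDerivAt_pow 2 k).const_mul ((3 / 2) * α₂))).congr_deriv (by norm_num; ring)
  have hAω : HasDerivAt (fun ω' => 𝒜 k ω') (1 / (2 * β)) ω := by
    simpa only [h𝒜] using hPω.div_const (2 * β)
  have hAk : HasDerivAt (fun k' => 𝒜 k' ω)
      (2 * (α₁ * k + (3 / 2) * α₂ * k ^ 2) / (2 * β)) k := by
    simpa only [h𝒜] using hPk.div_const (2 * β)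
  have hBω : HasDerivAt (fun ω' => ℬ k ω') ((α₁ * k + (3 / 2) * α₂ * k ^ 2) * 1 / β) ω := by
    simpa only [hℬ] using (hPω.const_mul _).div_const β
  have hBk : HasDerivAt (fun k' => ℬ k' ω) (((α₁ + 3 * α₂ * k) * (ω + α₁ * k ^ 2 + α₂ * k ^ 3)
      + (α₁ * k + (3 / 2) * α₂ * k ^ 2) * (2 * (α₁ * k + (3 / 2) * α₂ * k ^ 2))) / β) k := by
    simpa only [hℬ] using (hvk.fun_mul hPk).div_const β
  rw [hAω.deriv, hAk.deriv, hBω.deriv, hBk.deriv]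
  field_simp
  ring

/-- For the wave action `𝒜` and flux `ℬ` of the plane-wave solution of the higher-order
NLS equation with `ρ > 0`, the characteristic quadratic
`c ↦ ∂_ω𝒜 c² − (∂_k𝒜 + ∂_ωℬ) c + ∂_kℬ` has two distinct real roots iff
`β(α₁ + 3α₂k) < 0` (hyperbolicity of the Whitham modulation equations). -/
theorem higher_order_NLS_hyperbolicity
    (α₁ α₂ β : ℝ) (hβ : β ≠ 0)
    (𝒜 ℬ : ℝ → ℝ → ℝ)
    (h𝒜 : ∀ k ω, 𝒜 k ω = (ω + α₁ * k ^ 2 + α₂ * k ^ 3) / (2 * β))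
    (hℬ : ∀ k ω, ℬ k ω = (α₁ * k + (3 / 2) * α₂ * k ^ 2) * (ω + α₁ * k ^ 2 + α₂ * k ^ 3) / β)
    (k ω ρ : ℝ) (hρ : ρ = (ω + α₁ * k ^ 2 + α₂ * k ^ 3) / β) (hρ0 : 0 < ρ) :
    (∃ c₁ c₂ : ℝ, c₁ ≠ c₂ ∧
      (deriv (fun ω' => 𝒜 k ω') ω * c₁ ^ 2
        - (deriv (fun k' => 𝒜 k' ω) k + deriv (fun ω' => ℬ k ω') ω) * c₁
        + deriv (fun k' => ℬ k' ω) k = 0) ∧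
      (deriv (fun ω' => 𝒜 k ω') ω * c₂ ^ 2
        - (deriv (fun k' => 𝒜 k' ω) k + deriv (fun ω' => ℬ k ω') ω) * c₂
        + deriv (fun k' => ℬ k' ω) k = 0))
    ↔ β * (α₁ + 3 * α₂ * k) < 0 := by
  have hP : ω + α₁ * k ^ 2 + α₂ * k ^ 3 = ρ * β := by
    rw [hρ, div_mul_cancel₀ _ hβ]
  simp only [characteristic_quadratic_eq α₁ α₂ β hβ 𝒜 ℬ h𝒜 hℬ, div_eq_zero_iff,
    mul_ne_zero two_ne_zero hβ, or_false, exists_ne_sub_sq_add_eq_zero_iff, hP]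
  constructor <;> intro h <;> nlinarith
end

section
/- Let α₁, α₂, β ∈ ℝ with β ≠ 0, define 𝒜(k, ω) = (ω + α₁k² + α₂k³)/(2β) and ℬ(k, ω) = (α₁ k + (3/2) α₂ k²)(ω + α₁k² + α₂k³)/β, and fix (k, ω) with h := α₁ + 3α₂k ≠ 0, ρ := (ω + α₁k² + α₂k³)/β > 0 and α₂² ρ + 2β⁻¹ h³ = 0. Set c := 2α₁k + 3α₂k² + α₂βρ/h. Then −(1/2)·( c⁴·∂³_ω𝒜 − c³·(3∂_ω²∂_k𝒜 + ∂³_ωℬ) + 3c²·(∂_ω∂_k²𝒜 + ∂_ω²∂_kℬ) − c·(∂³_k𝒜 + 3∂_ω∂_k²ℬ) + ∂³_kℬ ) = 15 α₂² ρ / (2h), where all partial derivatives are evaluated at (k, ω). -/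
/-! 𝒜 and ℬ are affine in ω with polynomial coefficients in k, so every term carrying two
ω-derivatives vanishes and the coefficient reduces to
`−½ (∂³_kℬ − c (∂³_k𝒜 + 3∂_ω∂²_kℬ)) = −½ (6(α₁² + 10α₁α₂k + 15α₂²k²) − 12α₂c) / β`.
Substituting `c`, this is `−3h²/β + 6α₂²ρ/h`, and the degeneracy `α₂²ρ = −2h³/β` makes both it
and `15α₂²ρ/(2h)` equal to `−15h²/β`. -/

open Polynomial

section

variable {𝕜 : Type*} [NontriviallyNormedField 𝕜]

theorem Polynomial.iteratedDeriv_eval (p : 𝕜[X]) (n : ℕ) :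
    iteratedDeriv n (fun x => p.eval x) = fun x => (derivative^[n] p).eval x := by
  induction n generalizing p with
  | zero => simp
  | succ n ih =>
    have hp : _root_.deriv (fun x => p.eval x) = fun x => p.derivative.eval x := by
      ext; exact p.deriv
    rw [iteratedDeriv_succ', hp, ih, Function.iterate_succ_apply]

theorem iteratedDeriv_eval_add_mul_eval (P Q : 𝕜[X]) (ω : 𝕜) (n : ℕ) :
    iteratedDeriv n (fun k => P.eval k + ω * Q.eval k)
      = fun k => (derivative^[n] P).eval k + ω * (derivative^[n] Q).eval k := by
  simpa [iterate_map_add, iterate_derivative_C_mul] using (P + C ω * Q).iteratedDeriv_eval n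

theorem deriv_eval_add_mul_eval (P Q : 𝕜[X]) (ω : 𝕜) :
    deriv (fun k => P.eval k + ω * Q.eval k)
      = fun k => P.derivative.eval k + ω * Q.derivative.eval k := by
  simpa using iteratedDeriv_eval_add_mul_eval P Q ω 1

theorem deriv_const_add_mul_const (a b : 𝕜) : deriv (fun x => a + x * b) = fun _ => b := by
  ext; simp

theorem iteratedDeriv_const_add_mul_const (a b : 𝕜) (n : ℕ) :
    iteratedDeriv (n + 2) (fun x => a + x * b) = 0 := by
  rw [iteratedDeriv_succ', iteratedDeriv_succ', deriv_const_add_mul_const]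
  ext; simp

/-- `−½ (∂_k − c∂_ω)³ (ℬ − c𝒜)`, expanded. -/
noncomputable def mKdVCubicCoeff (𝒜 ℬ : 𝕜 → 𝕜 → 𝕜) (k ω c : 𝕜) : 𝕜 :=
  -(1 / 2) *
      (c ^ 4 * iteratedDeriv 3 (fun ω' => 𝒜 k ω') ω
        - c ^ 3 *
          (3 * deriv (fun ω₁ => deriv (fun ω₂ => deriv (fun k' => 𝒜 k' ω₂) k) ω₁) ω
            + iteratedDeriv 3 (fun ω' => ℬ k ω') ω)
        + 3 * c ^ 2 *
          (deriv (fun ω' => deriv (fun k₁ => deriv (fun k₂ => 𝒜 k₂ ω') k₁) k) ω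
            + deriv (fun ω₁ => deriv (fun ω₂ => deriv (fun k' => ℬ k' ω₂) k) ω₁) ω)
        - c *
          (iteratedDeriv 3 (fun k' => 𝒜 k' ω) k
            + 3 * deriv (fun ω' => deriv (fun k₁ => deriv (fun k₂ => ℬ k₂ ω') k₁) k) ω)
        + iteratedDeriv 3 (fun k' => ℬ k' ω) k)

theorem mKdVCubicCoeff_of_affine {𝒜 ℬ : 𝕜 → 𝕜 → 𝕜} {P Q R S : 𝕜[X]}
    (h𝒜 : ∀ k ω, 𝒜 k ω = P.eval k + ω * Q.eval k)
    (hℬ : ∀ k ω, ℬ k ω = R.eval k + ω * S.eval k) (k ω c : 𝕜) :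
    mKdVCubicCoeff 𝒜 ℬ k ω c =
      -(1 / 2) * (3 * c ^ 2 * (derivative^[2] Q).eval k
        - c * ((derivative^[3] P).eval k + ω * (derivative^[3] Q).eval k
          + 3 * (derivative^[2] S).eval k)
        + (derivative^[3] R).eval k + ω * (derivative^[3] S).eval k) := by
  obtain rfl : 𝒜 = fun k ω => P.eval k + ω * Q.eval k := funext₂ h𝒜
  obtain rfl : ℬ = fun k ω => R.eval k + ω * S.eval k := funext₂ hℬ
  simp only [mKdVCubicCoeff, iteratedDeriv_const_add_mul_const, deriv_eval_add_mul_eval,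
    iteratedDeriv_eval_add_mul_eval, deriv_const_add_mul_const, deriv_const', Pi.zero_apply,
    Function.iterate_succ_apply, Function.iterate_zero_apply]
  ring

end

theorem higher_order_NLS_cubic_coefficient_general
    (α₁ α₂ β : ℝ) (hβ : β ≠ 0)
    (𝒜 ℬ : ℝ → ℝ → ℝ)
    (h𝒜 : ∀ k ω, 𝒜 k ω = (ω + α₁ * k ^ 2 + α₂ * k ^ 3) / (2 * β))
    (hℬ : ∀ k ω, ℬ k ω = (α₁ * k + (3 / 2) * α₂ * k ^ 2) * (ω + α₁ * k ^ 2 + α₂ * k ^ 3) / β)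
    (k ω h ρ c : ℝ)
    (hh : h = α₁ + 3 * α₂ * k) (hh0 : h ≠ 0)
    (hdeg : α₂ ^ 2 * ρ + 2 * β⁻¹ * h ^ 3 = 0)
    (hc : c = 2 * α₁ * k + 3 * α₂ * k ^ 2 + α₂ * β * ρ / h) :
    -(1 / 2) *
      (c ^ 4 * iteratedDeriv 3 (fun ω' => 𝒜 k ω') ω
        - c ^ 3 *
          (3 * deriv (fun ω₁ => deriv (fun ω₂ => deriv (fun k' => 𝒜 k' ω₂) k) ω₁) ω
            + iteratedDeriv 3 (fun ω' => ℬ k ω') ω)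
        + 3 * c ^ 2 *
          (deriv (fun ω' => deriv (fun k₁ => deriv (fun k₂ => 𝒜 k₂ ω') k₁) k) ω
            + deriv (fun ω₁ => deriv (fun ω₂ => deriv (fun k' => ℬ k' ω₂) k) ω₁) ω)
        - c *
          (iteratedDeriv 3 (fun k' => 𝒜 k' ω) k
            + 3 * deriv (fun ω' => deriv (fun k₁ => deriv (fun k₂ => ℬ k₂ ω') k₁) k) ω)
        + iteratedDeriv 3 (fun k' => ℬ k' ω) k)
      = 15 * α₂ ^ 2 * ρ / (2 * h) := by
  have h𝒜' : ∀ k ω, 𝒜 k ω = (C (α₂ / (2 * β)) * X ^ 3 + C (α₁ / (2 * β)) * X ^ 2).eval k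
      + ω * (C (2 * β)⁻¹).eval k := by
    intro k ω; simp only [h𝒜, eval_add, eval_mul, eval_C, eval_pow, eval_X]; ring
  have hℬ' : ∀ k ω, ℬ k ω =
      (C (3 * α₂ ^ 2 / (2 * β)) * X ^ 5 + C (5 * α₁ * α₂ / (2 * β)) * X ^ 4
        + C (α₁ ^ 2 / β) * X ^ 3).eval k
      + ω * (C (3 * α₂ / (2 * β)) * X ^ 2 + C (α₁ / β) * X).eval k := by
    intro k ω; simp only [hℬ, eval_add, eval_mul, eval_C, eval_pow, eval_X]; ring
  have hdeg' : α₂ ^ 2 * β * ρ = -2 * h ^ 3 := by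
    field_simp at hdeg; linear_combination hdeg
  change mKdVCubicCoeff 𝒜 ℬ k ω c = _
  rw [mKdVCubicCoeff_of_affine h𝒜' hℬ']
  norm_num [Function.iterate_succ_apply]
  rw [hc]
  field_simp
  subst hh
  linear_combination -6 * hdeg'

/-- The cubic-nonlinearity coefficient of the modified KdV equation obtained by phase
modulation of the higher-order NLS plane wave at a local linear degeneracy:
`−½(c⁴∂³_ω𝒜 − c³(3∂²_ω∂_k𝒜 + ∂³_ωℬ) + 3c²(∂_ω∂²_k𝒜 + ∂²_ω∂_kℬ)
   − c(∂³_k𝒜 + 3∂_ω∂²_kℬ) + ∂³_kℬ) = 15α₂²ρ/(2h)`. -/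
theorem higher_order_NLS_cubic_coefficient
    (α₁ α₂ β : ℝ) (hβ : β ≠ 0)
    (𝒜 ℬ : ℝ → ℝ → ℝ)
    (h𝒜 : ∀ k ω, 𝒜 k ω = (ω + α₁ * k ^ 2 + α₂ * k ^ 3) / (2 * β))
    (hℬ : ∀ k ω, ℬ k ω = (α₁ * k + (3 / 2) * α₂ * k ^ 2) * (ω + α₁ * k ^ 2 + α₂ * k ^ 3) / β)
    (k ω h ρ c : ℝ)
    (hh : h = α₁ + 3 * α₂ * k) (hh0 : h ≠ 0)
    (hρ : ρ = (ω + α₁ * k ^ 2 + α₂ * k ^ 3) / β) (hρ0 : 0 < ρ)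
    (hdeg : α₂ ^ 2 * ρ + 2 * β⁻¹ * h ^ 3 = 0)
    (hc : c = 2 * α₁ * k + 3 * α₂ * k ^ 2 + α₂ * β * ρ / h) :
    -(1 / 2) *
      (c ^ 4 * iteratedDeriv 3 (fun ω' => 𝒜 k ω') ω
        - c ^ 3 *
          (3 * deriv (fun ω₁ => deriv (fun ω₂ => deriv (fun k' => 𝒜 k' ω₂) k) ω₁) ω
            + iteratedDeriv 3 (fun ω' => ℬ k ω') ω)
        + 3 * c ^ 2 *
          (deriv (fun ω' => deriv (fun k₁ => deriv (fun k₂ => 𝒜 k₂ ω') k₁) k) ω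
            + deriv (fun ω₁ => deriv (fun ω₂ => deriv (fun k' => ℬ k' ω₂) k) ω₁) ω)
        - c *
          (iteratedDeriv 3 (fun k' => 𝒜 k' ω) k
            + 3 * deriv (fun ω' => deriv (fun k₁ => deriv (fun k₂ => ℬ k₂ ω') k₁) k) ω)
        + iteratedDeriv 3 (fun k' => ℬ k' ω) k)
      = 15 * α₂ ^ 2 * ρ / (2 * h) :=
  higher_order_NLS_cubic_coefficient_general α₁ α₂ β hβ 𝒜 ℬ h𝒜 hℬ k ω h ρ c hh hh0 hdeg hc
end

section
/- Let α₁, α₂, β, k, ω ∈ ℝ with β ≠ 0, h := α₁ + 3α₂k ≠ 0, ρ := (ω + α₁k² + α₂k³)/β > 0, α₂ ≠ 0, and suppose the degeneracy condition α₂² ρ + 2β⁻¹ h³ = 0 holds. Let ε ∈ {1, −1} be such that 2α₁k + 3α₂k² + ε√(−2βρh) = 2α₁k + 3α₂k² + α₂βρ/h (i.e., ε√(−2βρh) equals the degenerate root offset), and define σ : ℝ → ℝ by σ(ν) = (2α₁k + 3α₂k²)ν + α₂ν³ + ε ν √(−2βρh + h²ν²). Then σ is three times differentiable at ν = 0 and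 σ'''(0) = 9α₂/2, i.e. (1/6)σ'''(0) = 3α₂/4. -/
/-!
For `p > 0` put `S x = √(p + q x²)`, so `S(0) = √p` and `S'(0) = 0`. Differentiating `S · S = p + q x²`
twice at `0` by the Leibniz rule gives `S''(0) = q / √p`, and Leibniz once more gives
`(x S)'''(0) = 3 S''(0) = 3q / √p`. Here `p = -2βρh`, `q = h²`, and the root condition says
`ε √p = c` with `c = α₂βρ/h`. The degeneracy condition is `α₂ c = -2h²`; it forces `c ≠ 0` and
`p = c²`, so `ε / √p = 1 / c` and `σ'''(0) = 6α₂ + 3h² / c = 6α₂ - 3α₂/2 = 9α₂/2`.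
-/

open Filter Topology

noncomputable def dispersionBranch (A B ε p q x : ℝ) : ℝ :=
  A * x + B * x ^ 3 + ε * x * √(p + q * x ^ 2)

section SqrtQuadratic

variable {p : ℝ} (q : ℝ)

theorem contDiffAt_sqrt_add_mul_sq (hp : 0 < p) (n : WithTop ℕ∞) :
    ContDiffAt ℝ n (fun x : ℝ => √(p + q * x ^ 2)) 0 :=
  (contDiffAt_const.add (contDiffAt_const.mul (contDiffAt_id.pow 2))).sqrt (by simp [hp.ne'])

theorem sqrt_add_mul_sq_mul_self_eventuallyEq (hp : 0 < p) :
    (fun x : ℝ => √(p + q * x ^ 2)) * (fun x => √(p + q * x ^ 2)) =ᶠ[𝓝 0]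
      fun x => p + q * x ^ 2 := by
  have hcont : ContinuousAt (fun x : ℝ => p + q * x ^ 2) 0 := by fun_prop
  filter_upwards [hcont.eventually (eventually_gt_nhds (by simpa using hp))] with x hx
  exact Real.mul_self_sqrt hx.le

theorem deriv_sqrt_add_mul_sq_zero (hp : 0 < p) :
    deriv (fun x : ℝ => √(p + q * x ^ 2)) 0 = 0 := by
  simpa using (((hasDerivAt_pow 2 (0 : ℝ)).const_mul q).const_add p).sqrt (by simp [hp.ne']) |>.deriv

theorem iteratedDeriv_two_sqrt_add_mul_sq_zero (hp : 0 < p) :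
    iteratedDeriv 2 (fun x : ℝ => √(p + q * x ^ 2)) 0 = q / √p := by
  have hS := contDiffAt_sqrt_add_mul_sq q hp 2
  have hleft : iteratedDeriv 2 ((fun x : ℝ => √(p + q * x ^ 2)) * fun x => √(p + q * x ^ 2)) 0 =
      2 * √p * iteratedDeriv 2 (fun x : ℝ => √(p + q * x ^ 2)) 0 := by
    rw [iteratedDeriv_mul hS hS]
    simp [Finset.sum_range_succ, deriv_sqrt_add_mul_sq_zero q hp, two_mul, add_mul, mul_comm]
  have hright : iteratedDeriv 2 (fun x : ℝ => p + q * x ^ 2) 0 = 2 * q := by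
    simp [iteratedDeriv_const_add, mul_comm]
  rw [eq_div_iff (Real.sqrt_pos.2 hp).ne']
  linarith [(sqrt_add_mul_sq_mul_self_eventuallyEq q hp).iteratedDeriv_eq 2]

theorem iteratedDeriv_three_mul_sqrt_add_mul_sq_zero (hp : 0 < p) :
    iteratedDeriv 3 (fun x : ℝ => x * √(p + q * x ^ 2)) 0 = 3 * q / √p := by
  rw [iteratedDeriv_fun_mul (f := fun x => x) contDiffAt_id (contDiffAt_sqrt_add_mul_sq q hp 3)]
  simp [iteratedDeriv_fun_id_zero, iteratedDeriv_two_sqrt_add_mul_sq_zero q hp, mul_div_assoc]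

end SqrtQuadratic

section DispersionBranch

variable (A B ε : ℝ) {p : ℝ} (q : ℝ)

theorem contDiffAt_dispersionBranch (hp : 0 < p) (n : WithTop ℕ∞) :
    ContDiffAt ℝ n (dispersionBranch A B ε p q) 0 := by
  have hS := contDiffAt_sqrt_add_mul_sq q hp n
  unfold dispersionBranch
  fun_prop

theorem iteratedDeriv_three_dispersionBranch_zero (hp : 0 < p) :
    iteratedDeriv 3 (dispersionBranch A B ε p q) 0 = 6 * B + ε * (3 * q / √p) := by
  have hS := contDiffAt_sqrt_add_mul_sq q hp 3
  unfold dispersionBranch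
  simp only [mul_assoc ε]
  rw [iteratedDeriv_fun_add (by fun_prop) (by fun_prop),
    iteratedDeriv_fun_add (by fun_prop) (by fun_prop),
    iteratedDeriv_const_mul_field A (fun x => x)]
  simp only [iteratedDeriv_const_mul_field, iteratedDeriv_fun_id_zero, iteratedDeriv_fun_pow_zero,
    iteratedDeriv_three_mul_sqrt_add_mul_sq_zero q hp]
  norm_num [mul_comm]

end DispersionBranch

section DegenerateRoot

variable {α₂ β ρ h : ℝ}

theorem mul_degenerate_root_offset (hβ : β ≠ 0) (hh : h ≠ 0)
    (hdeg : α₂ ^ 2 * ρ + 2 * β⁻¹ * h ^ 3 = 0) :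
    α₂ * (α₂ * β * ρ / h) = -2 * h ^ 2 := by
  field_simp at hdeg ⊢
  linear_combination hdeg

theorem degenerate_root_offset_sq (hβ : β ≠ 0) (hh : h ≠ 0)
    (hdeg : α₂ ^ 2 * ρ + 2 * β⁻¹ * h ^ 3 = 0) :
    (α₂ * β * ρ / h) ^ 2 = -2 * β * ρ * h := by
  field_simp at hdeg ⊢
  linear_combination ρ * hdeg

end DegenerateRoot

theorem higher_order_NLS_dispersion_third_derivative_general
    (α₁ α₂ β k h ρ : ℝ) (hβ : β ≠ 0)
    (hh0 : h ≠ 0)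
    (hdeg : α₂ ^ 2 * ρ + 2 * β⁻¹ * h ^ 3 = 0)
    (ε : ℝ)
    (hεroot : 2 * α₁ * k + 3 * α₂ * k ^ 2 + ε * Real.sqrt (-2 * β * ρ * h)
      = 2 * α₁ * k + 3 * α₂ * k ^ 2 + α₂ * β * ρ / h)
    (σ : ℝ → ℝ)
    (hσ : ∀ ν, σ ν = (2 * α₁ * k + 3 * α₂ * k ^ 2) * ν + α₂ * ν ^ 3
      + ε * ν * Real.sqrt (-2 * β * ρ * h + h ^ 2 * ν ^ 2)) :
    ContDiffAt ℝ 3 σ 0 ∧ iteratedDeriv 3 σ 0 = 9 * α₂ / 2 ∧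
      (1 / 6) * iteratedDeriv 3 σ 0 = 3 * α₂ / 4 := by
  have hα₂c := mul_degenerate_root_offset hβ hh0 hdeg
  have hp := (degenerate_root_offset_sq hβ hh0 hdeg).symm
  generalize α₂ * β * ρ / h = c at hεroot hα₂c hp
  have hc0 : c ≠ 0 := by
    rintro rfl
    simp [hh0] at hα₂c
  have hp0 : 0 < -2 * β * ρ * h := hp ▸ by positivity
  have hεc : ε * √(-2 * β * ρ * h) = c := by linarith
  have hεp : ε / √(-2 * β * ρ * h) = c⁻¹ := calc
    ε / √(-2 * β * ρ * h) = ε * √(-2 * β * ρ * h) / √(-2 * β * ρ * h) ^ 2 := by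
      field_simp [(Real.sqrt_pos.2 hp0).ne']
    _ = c⁻¹ := by rw [hεc, Real.sq_sqrt hp0.le, hp]; field_simp
  have hval : 6 * α₂ + ε * (3 * h ^ 2 / √(-2 * β * ρ * h)) = 9 * α₂ / 2 := calc
    _ = 6 * α₂ + 3 * h ^ 2 * (ε / √(-2 * β * ρ * h)) := by ring
    _ = 9 * α₂ / 2 := by rw [hεp]; field_simp; linear_combination 3 * hα₂c
  have hσ' : σ = dispersionBranch (2 * α₁ * k + 3 * α₂ * k ^ 2) α₂ ε (-2 * β * ρ * h) (h ^ 2) :=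
    funext hσ
  rw [hσ', iteratedDeriv_three_dispersionBranch_zero _ _ _ _ hp0, hval]
  exact ⟨contDiffAt_dispersionBranch _ _ _ _ hp0 3, rfl, by ring⟩

/-- The branch of the linear dispersion relation about the higher-order NLS plane wave
whose long-wave speed equals the locally linearly degenerate characteristic satisfies
`σ'''(0) = 9α₂/2`, i.e. `(1/6)σ'''(0) = 3α₂/4`. -/
theorem higher_order_NLS_dispersion_third_derivative
    (α₁ α₂ β k ω h ρ : ℝ) (hβ : β ≠ 0) (hα₂ : α₂ ≠ 0)
    (hh : h = α₁ + 3 * α₂ * k) (hh0 : h ≠ 0)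
    (hρ : ρ = (ω + α₁ * k ^ 2 + α₂ * k ^ 3) / β) (hρ0 : 0 < ρ)
    (hdeg : α₂ ^ 2 * ρ + 2 * β⁻¹ * h ^ 3 = 0)
    (ε : ℝ) (hε : ε = 1 ∨ ε = -1)
    (hεroot : 2 * α₁ * k + 3 * α₂ * k ^ 2 + ε * Real.sqrt (-2 * β * ρ * h)
      = 2 * α₁ * k + 3 * α₂ * k ^ 2 + α₂ * β * ρ / h)
    (σ : ℝ → ℝ)
    (hσ : ∀ ν, σ ν = (2 * α₁ * k + 3 * α₂ * k ^ 2) * ν + α₂ * ν ^ 3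
      + ε * ν * Real.sqrt (-2 * β * ρ * h + h ^ 2 * ν ^ 2)) :
    ContDiffAt ℝ 3 σ 0 ∧ iteratedDeriv 3 σ 0 = 9 * α₂ / 2 ∧
      (1 / 6) * iteratedDeriv 3 σ 0 = 3 * α₂ / 4 :=
  higher_order_NLS_dispersion_third_derivative_general α₁ α₂ β k h ρ hβ hh0 hdeg ε hεroot σ hσ
end

section
/- Let ρ₁, ρ₂, ρ₃, H₁, H₂, H₃, g be positive reals with ρ₁ < ρ₂ < ρ₃. Set P := ρ₁ρ₂H₃ + ρ₁ρ₃H₂ + ρ₂ρ₃H₁, Q := g(ρ₃(ρ₂−ρ₁)H₁H₂ + ρ₂(ρ₃−ρ₁)H₁H₃ + ρ₁(ρ₃−ρ₂)H₂H₃) and R := g²(ρ₂−ρ₁)(ρ₃−ρ₂)H₁H₂H₃. Then Q² ≥ 4PR, and the quadratic P X² − Q X + R has two (not necessarily distinct) positive real roots; consequently every root c of the biquadratic P c⁴ − Q c² + R = 0 is real. -/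
/-!
Writing `a = ρ₂ - ρ₁` and `b = ρ₃ - ρ₂`, the discriminant of `P X² - Q X + R` is the sum of
squares `g² ((ρ₃ a H₁ H₂ - ρ₁ b H₂ H₃ + ρ₂ (a - b) H₁ H₃)² + 4 a b (ρ₂ H₁ H₃)²)`, which is
nonnegative for a stable stratification. Since `P, Q, R > 0`, both roots `X` of the quadratic are
then positive, so every root `c` of the biquadratic satisfies `c² = X > 0` and is real.
-/

open Complex

theorem quadratic_eq_mul_sub_mul_sub {K : Type*} [Field K] [NeZero (2 : K)] {a b c s : K}
    (ha : a ≠ 0) (h : discrim a b c = s * s) (x : K) :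
    a * x ^ 2 + b * x + c = a * (x - (-b + s) / (2 * a)) * (x - (-b - s) / (2 * a)) := by
  have h2 : (2 : K) ≠ 0 := two_ne_zero
  rw [discrim] at h
  field_simp
  linear_combination -h

theorem exists_pos_roots_of_discrim_nonneg {a b c : ℝ} (ha : 0 < a) (hb : 0 < b) (hc : 0 < c)
    (hd : 0 ≤ discrim a (-b) c) :
    ∃ x₁ x₂ : ℝ, 0 < x₁ ∧ 0 < x₂ ∧ ∀ x, a * x ^ 2 - b * x + c = a * (x - x₁) * (x - x₂) := by
  set s := √(discrim a (-b) c)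
  have hs : discrim a (-b) c = s * s := (Real.mul_self_sqrt hd).symm
  have hs_lt : s < b := by
    rw [discrim, neg_sq] at hs
    nlinarith [Real.sqrt_nonneg (discrim a (-b) c), mul_pos ha hc]
  refine ⟨(b + s) / (2 * a), (b - s) / (2 * a), by positivity, div_pos (by linarith) (by positivity),
    fun x => ?_⟩
  simpa [sub_eq_add_neg, neg_mul] using quadratic_eq_mul_sub_mul_sub ha.ne' hs x

theorem Complex.im_eq_zero_of_sq_eq_ofReal {z : ℂ} {x : ℝ} (hx : 0 ≤ x) (h : z ^ 2 = x) :
    z.im = 0 := by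
  have h' : z ^ 2 = (√x : ℂ) ^ 2 := by rw [← ofReal_pow, Real.sq_sqrt hx, h]
  rcases sq_eq_sq_iff_eq_or_eq_neg.1 h' with rfl | rfl <;> simp

theorem im_eq_zero_of_biquadratic_eq_zero {a b c x₁ x₂ : ℝ} (ha : a ≠ 0) (hx₁ : 0 ≤ x₁)
    (hx₂ : 0 ≤ x₂) (hfac : ∀ x, a * x ^ 2 - b * x + c = a * (x - x₁) * (x - x₂)) {z : ℂ}
    (hz : (a : ℂ) * z ^ 4 - b * z ^ 2 + c = 0) : z.im = 0 := by
  have hc : c = a * x₁ * x₂ := by linear_combination hfac 0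
  have hb : b = a * (x₁ + x₂) := by linear_combination hc - hfac 1
  have hcC : (c : ℂ) = a * x₁ * x₂ := by exact_mod_cast hc
  have hbC : (b : ℂ) = a * (x₁ + x₂) := by exact_mod_cast hb
  have hroot : (a : ℂ) * (z ^ 2 - x₁) * (z ^ 2 - x₂) = 0 := by
    linear_combination hz + z ^ 2 * hbC - hcC
  rcases mul_eq_zero.1 hroot with hroot | hroot
  · rcases mul_eq_zero.1 hroot with hroot | hroot
    · exact absurd (ofReal_eq_zero.1 hroot) ha
    · exact im_eq_zero_of_sq_eq_ofReal hx₁ (sub_eq_zero.1 hroot)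
  · exact im_eq_zero_of_sq_eq_ofReal hx₂ (sub_eq_zero.1 hroot)

section ThreeLayer

variable {ρ₁ ρ₂ ρ₃ H₁ H₂ H₃ g P Q R : ℝ}

theorem three_layer_discrim_eq (hP : P = ρ₁ * ρ₂ * H₃ + ρ₁ * ρ₃ * H₂ + ρ₂ * ρ₃ * H₁)
    (hQ : Q = g * (ρ₃ * (ρ₂ - ρ₁) * H₁ * H₂ + ρ₂ * (ρ₃ - ρ₁) * H₁ * H₃
      + ρ₁ * (ρ₃ - ρ₂) * H₂ * H₃))
    (hR : R = g ^ 2 * (ρ₂ - ρ₁) * (ρ₃ - ρ₂) * H₁ * H₂ * H₃) :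
    discrim P (-Q) R = g ^ 2 * ((ρ₃ * (ρ₂ - ρ₁) * H₁ * H₂ - ρ₁ * (ρ₃ - ρ₂) * H₂ * H₃
      + ρ₂ * ((ρ₂ - ρ₁) - (ρ₃ - ρ₂)) * H₁ * H₃) ^ 2
      + 4 * (ρ₂ - ρ₁) * (ρ₃ - ρ₂) * (ρ₂ * H₁ * H₃) ^ 2) := by
  subst hP hQ hR
  rw [discrim]
  ring

theorem three_layer_discrim_nonneg (hP : P = ρ₁ * ρ₂ * H₃ + ρ₁ * ρ₃ * H₂ + ρ₂ * ρ₃ * H₁)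
    (hQ : Q = g * (ρ₃ * (ρ₂ - ρ₁) * H₁ * H₂ + ρ₂ * (ρ₃ - ρ₁) * H₁ * H₃
      + ρ₁ * (ρ₃ - ρ₂) * H₂ * H₃))
    (hR : R = g ^ 2 * (ρ₂ - ρ₁) * (ρ₃ - ρ₂) * H₁ * H₂ * H₃) (h12 : ρ₁ ≤ ρ₂) (h23 : ρ₂ ≤ ρ₃) :
    0 ≤ discrim P (-Q) R := by
  have h₁₂ : 0 ≤ ρ₂ - ρ₁ := sub_nonneg.2 h12
  have h₂₃ : 0 ≤ ρ₃ - ρ₂ := sub_nonneg.2 h23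
  rw [three_layer_discrim_eq hP hQ hR]
  positivity

end ThreeLayer

/-- For a stably stratified three-layer rigid-lid shallow-water system
(`ρ₁ < ρ₂ < ρ₃`), the characteristic biquadratic `P c⁴ − Q c² + R = 0` has
discriminant `Q² ≥ 4PR`, the quadratic `P X² − Q X + R` has two (not necessarily
distinct) positive real roots, and consequently every (complex) root `c` of the
biquadratic is real. -/
theorem three_layer_characteristics_real
    (ρ₁ ρ₂ ρ₃ H₁ H₂ H₃ g : ℝ)
    (hρ₁ : 0 < ρ₁) (hρ₂ : 0 < ρ₂) (hρ₃ : 0 < ρ₃)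
    (hH₁ : 0 < H₁) (hH₂ : 0 < H₂) (hH₃ : 0 < H₃) (hg : 0 < g)
    (h12 : ρ₁ < ρ₂) (h23 : ρ₂ < ρ₃)
    (P Q R : ℝ)
    (hP : P = ρ₁ * ρ₂ * H₃ + ρ₁ * ρ₃ * H₂ + ρ₂ * ρ₃ * H₁)
    (hQ : Q = g * (ρ₃ * (ρ₂ - ρ₁) * H₁ * H₂ + ρ₂ * (ρ₃ - ρ₁) * H₁ * H₃
        + ρ₁ * (ρ₃ - ρ₂) * H₂ * H₃))
    (hR : R = g ^ 2 * (ρ₂ - ρ₁) * (ρ₃ - ρ₂) * H₁ * H₂ * H₃) :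
    Q ^ 2 ≥ 4 * P * R ∧
    (∃ x₁ x₂ : ℝ, 0 < x₁ ∧ 0 < x₂ ∧
      ∀ X : ℝ, P * X ^ 2 - Q * X + R = P * (X - x₁) * (X - x₂)) ∧
    (∀ z : ℂ, (P : ℂ) * z ^ 4 - (Q : ℂ) * z ^ 2 + (R : ℂ) = 0 → z.im = 0) := by
  have h₁₂ : 0 < ρ₂ - ρ₁ := sub_pos.2 h12
  have h₂₃ : 0 < ρ₃ - ρ₂ := sub_pos.2 h23
  have h₁₃ : 0 < ρ₃ - ρ₁ := sub_pos.2 (h12.trans h23)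
  have hP₀ : 0 < P := by rw [hP]; positivity
  have hQ₀ : 0 < Q := by rw [hQ]; positivity
  have hR₀ : 0 < R := by rw [hR]; positivity
  have hdisc := three_layer_discrim_nonneg hP hQ hR h12.le h23.le
  obtain ⟨x₁, x₂, hx₁, hx₂, hfac⟩ := exists_pos_roots_of_discrim_nonneg hP₀ hQ₀ hR₀ hdisc
  refine ⟨?_, ⟨x₁, x₂, hx₁, hx₂, hfac⟩,
    fun z hz => im_eq_zero_of_biquadratic_eq_zero hP₀.ne' hx₁.le hx₂.le hfac hz⟩
  rw [discrim, neg_sq] at hdisc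
  linarith
end
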